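/- arXiv:1712.03358 — 5 statements merged into one kernel-verified Lean document; each statement's English description precedes it below -/
import Mathlib

section
/- For k > 0 and 0 < d < 1, the identity (1+d)²(3−d)²(1+k)² − 16 = (7+2d−d²+k(1+d)(3−d))·(k(1+d)(3−d)−(1−d)²) holds; if additionally k > (1−d)²/((1+d)(3−d)), then this quantity is positive, so 2⁻⁴(1+d)²(3−d)²σ²τ − (1+k)⁻²σ²τ is positive definite for positive definite τ and σ ≠ 0. -/
/-! With `p = (1 + d)(3 - d) = 4 - (1 - d)²` and `x = p(1 + k)`, both factors of the identity are
`x + 4` and `x - 4`, and the threshold on `k` says exactly `x > 4`. The matrix is then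
`σ² (x² - 16) / (16 (1 + k)²) • τ`, a positive multiple of `τ`. -/

open Matrix

lemma dispersion_factorization (d k : ℝ) :
    (1 + d) ^ 2 * (3 - d) ^ 2 * (1 + k) ^ 2 - 16 =
      (7 + 2 * d - d ^ 2 + k * (1 + d) * (3 - d)) * (k * (1 + d) * (3 - d) - (1 - d) ^ 2) := by
  ring

lemma four_lt_mul_one_add_of_div_lt {p k : ℝ} (hp : 0 < p) (hk : (4 - p) / p < k) :
    4 < p * (1 + k) := by
  rw [div_lt_iff₀ hp] at hk
  linarith

lemma four_lt_of_one_sub_sq_div_lt {d k : ℝ} (hd : -1 < d) (hd3 : d < 3)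
    (hk : (1 - d) ^ 2 / ((1 + d) * (3 - d)) < k) : 4 < (1 + d) * (3 - d) * (1 + k) := by
  rw [show (1 - d) ^ 2 = 4 - (1 + d) * (3 - d) by ring] at hk
  exact four_lt_mul_one_add_of_div_lt (mul_pos (by linarith) (by linarith)) hk

lemma inv_sq_lt_of_four_lt_mul {x y : ℝ} (h : 4 < x * y) : (y ^ 2)⁻¹ < 2⁻¹ ^ 4 * x ^ 2 := by
  have hy : y ≠ 0 := by rintro rfl; norm_num at h
  rw [inv_lt_iff_one_lt_mul₀ (by positivity)]
  nlinarith

theorem stmt_6_general {l : ℕ} (τ : Matrix (Fin l) (Fin l) ℝ) (hτ : τ.PosDef)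
    (σ k d : ℝ) (hσ : σ ≠ 0) (hd : 0 < d) (hd1 : d < 1) :
    (1 + d) ^ 2 * (3 - d) ^ 2 * (1 + k) ^ 2 - 16 =
      (7 + 2 * d - d ^ 2 + k * (1 + d) * (3 - d)) *
        (k * (1 + d) * (3 - d) - (1 - d) ^ 2) ∧
    (k > (1 - d) ^ 2 / ((1 + d) * (3 - d)) →
      0 < (7 + 2 * d - d ^ 2 + k * (1 + d) * (3 - d)) *
            (k * (1 + d) * (3 - d) - (1 - d) ^ 2) ∧
      (((2 : ℝ)⁻¹ ^ 4 * (1 + d) ^ 2 * (3 - d) ^ 2 * σ ^ 2) • τ -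
        (((1 + k) ^ 2)⁻¹ * σ ^ 2) • τ).PosDef) := by
  refine ⟨dispersion_factorization d k, fun hk => ?_⟩
  have hx := four_lt_of_one_sub_sq_div_lt (by linarith) (by linarith) hk
  refine ⟨?_, ?_⟩
  · rw [← dispersion_factorization]
    nlinarith
  · have hinv := inv_sq_lt_of_four_lt_mul hx
    rw [mul_pow] at hinv
    rw [← sub_smul, ← sub_mul]
    exact hτ.smul (mul_pos (by linarith) (by positivity))

theorem stmt_6 {l : ℕ} (τ : Matrix (Fin l) (Fin l) ℝ) (hτ : τ.PosDef)
    (σ k d : ℝ) (hσ : σ ≠ 0) (hk : 0 < k) (hd : 0 < d) (hd1 : d < 1) :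
    (1 + d) ^ 2 * (3 - d) ^ 2 * (1 + k) ^ 2 - 16 =
      (7 + 2 * d - d ^ 2 + k * (1 + d) * (3 - d)) *
        (k * (1 + d) * (3 - d) - (1 - d) ^ 2) ∧
    (k > (1 - d) ^ 2 / ((1 + d) * (3 - d)) →
      0 < (7 + 2 * d - d ^ 2 + k * (1 + d) * (3 - d)) *
            (k * (1 + d) * (3 - d) - (1 - d) ^ 2) ∧
      (((2 : ℝ)⁻¹ ^ 4 * (1 + d) ^ 2 * (3 - d) ^ 2 * σ ^ 2) • τ -
        (((1 + k) ^ 2)⁻¹ * σ ^ 2) • τ).PosDef) :=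
  stmt_6_general τ hτ σ k d hσ hd hd1
end

section
/- For k > 0 and 0 < d < 1, the identity (1+d)²(1+k)⁴ − 4(1+2k)² = (3+6k+k²+d(1+k)²)·(k²−2k−1+d(1+k)²) holds; if additionally d > (1+2k−k²)/(1+k)², then this quantity is positive, so 2⁻²(1+d)²σ²τ − (1+k)⁻⁴(1+2k)²σ²τ is positive definite for positive definite τ and σ ≠ 0. -/
/-! The gap `(1 + d)² (1 + k)⁴ - 4 (1 + 2k)²` factors as a difference of squares. The first
factor is always positive, and the bound on `d` is exactly positivity of the second one. A positive
gap means the scalar `(1 + d)² σ² / 4` exceeds `(1 + 2k)² σ² / (1 + k)⁴`, and a positive multiple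
of a positive definite matrix is positive definite. -/

open Matrix

open scoped ComplexOrder in
theorem Matrix.PosDef.smul_sub_smul {n 𝕜 : Type*} [Fintype n] [RCLike 𝕜] {A : Matrix n n 𝕜}
    (hA : A.PosDef) {a b : ℝ} (hba : b < a) : (a • A - b • A).PosDef := by
  rw [← sub_smul]
  exact hA.smul (sub_pos.2 hba)

theorem dispersion_gap_factorization (k d : ℝ) :
    (1 + d) ^ 2 * (1 + k) ^ 4 - 4 * (1 + 2 * k) ^ 2 =
      (3 + 6 * k + k ^ 2 + d * (1 + k) ^ 2) * (k ^ 2 - 2 * k - 1 + d * (1 + k) ^ 2) := by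
  ring

theorem dispersion_gap_factors_pos {k d : ℝ} (hk : 0 < k)
    (hd : (1 + 2 * k - k ^ 2) / (1 + k) ^ 2 < d) :
    0 < 3 + 6 * k + k ^ 2 + d * (1 + k) ^ 2 ∧ 0 < k ^ 2 - 2 * k - 1 + d * (1 + k) ^ 2 := by
  rw [div_lt_iff₀ (by positivity)] at hd
  constructor <;> linarith

theorem stmt_7_general {l : ℕ} (τ : Matrix (Fin l) (Fin l) ℝ) (hτ : τ.PosDef)
    (σ k d : ℝ) (hσ : σ ≠ 0) (hk : 0 < k) :
    (1 + d) ^ 2 * (1 + k) ^ 4 - 4 * (1 + 2 * k) ^ 2 =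
      (3 + 6 * k + k ^ 2 + d * (1 + k) ^ 2) *
        (k ^ 2 - 2 * k - 1 + d * (1 + k) ^ 2) ∧
    (d > (1 + 2 * k - k ^ 2) / (1 + k) ^ 2 →
      0 < (3 + 6 * k + k ^ 2 + d * (1 + k) ^ 2) *
            (k ^ 2 - 2 * k - 1 + d * (1 + k) ^ 2) ∧
      (((2 : ℝ)⁻¹ ^ 2 * (1 + d) ^ 2 * σ ^ 2) • τ -
        (((1 + k) ^ 4)⁻¹ * (1 + 2 * k) ^ 2 * σ ^ 2) • τ).PosDef) := by
  refine ⟨dispersion_gap_factorization k d, fun hdk => ?_⟩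
  obtain ⟨hfirst, hsecond⟩ := dispersion_gap_factors_pos hk hdk
  have hgap := mul_pos hfirst hsecond
  refine ⟨hgap, hτ.smul_sub_smul ?_⟩
  rw [← dispersion_gap_factorization] at hgap
  have hσ2 : 0 < σ ^ 2 := by positivity
  gcongr ?_ * σ ^ 2
  rw [inv_mul_lt_iff₀ (by positivity)]
  linarith

theorem stmt_7 {l : ℕ} (τ : Matrix (Fin l) (Fin l) ℝ) (hτ : τ.PosDef)
    (σ k d : ℝ) (hσ : σ ≠ 0) (hk : 0 < k) (hd : 0 < d) (hd1 : d < 1) :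
    (1 + d) ^ 2 * (1 + k) ^ 4 - 4 * (1 + 2 * k) ^ 2 =
      (3 + 6 * k + k ^ 2 + d * (1 + k) ^ 2) *
        (k ^ 2 - 2 * k - 1 + d * (1 + k) ^ 2) ∧
    (d > (1 + 2 * k - k ^ 2) / (1 + k) ^ 2 →
      0 < (3 + 6 * k + k ^ 2 + d * (1 + k) ^ 2) *
            (k ^ 2 - 2 * k - 1 + d * (1 + k) ^ 2) ∧
      (((2 : ℝ)⁻¹ ^ 2 * (1 + d) ^ 2 * σ ^ 2) • τ -
        (((1 + k) ^ 4)⁻¹ * (1 + 2 * k) ^ 2 * σ ^ 2) • τ).PosDef) :=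
  stmt_7_general τ hτ σ k d hσ hk
end

section
/- Let B be a symmetric positive semidefinite real n×n matrix, b an n-vector, and λ > 0 a real number. Then λB − bb' is positive semidefinite if and only if b lies in the column space of B and b'B⁻b ≤ λ, where B⁻ is any generalized inverse of B (the value of b'B⁻b is independent of the choice of B⁻ when b ∈ range(B)). -/
/-!
Positivity of `λB - bbᵀ` says `(b ⬝ y)² ≤ λ yᵀBy` for every `y`. Testing `y ∈ ker B` gives
`b ⊥ ker B`; since the columns of `I - GB` lie in `ker B` for a generalized inverse `G`, this
means `b = B Gᵀ b`. Once `b = Bx`, every generalized inverse gives `bᵀGb = xᵀBx`, and the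
inequality reduces to `xᵀBx ≤ λ`: necessity by testing `y = x`, sufficiency by Cauchy–Schwarz
for the semidefinite form `yᵀBy`.
-/

open Matrix

namespace Matrix

variable {n R : Type*} [Fintype n]

lemma IsSymm.dotProduct_mulVec_comm [CommSemiring R] {B : Matrix n n R} (hB : B.IsSymm)
    (x y : n → R) : x ⬝ᵥ (B *ᵥ y) = y ⬝ᵥ (B *ᵥ x) := by
  rw [dotProduct_mulVec, ← mulVec_transpose, hB.eq, dotProduct_comm]

lemma dotProduct_vecMulVec_self_mulVec [CommSemiring R] (b y : n → R) :
    y ⬝ᵥ (vecMulVec b b *ᵥ y) = (b ⬝ᵥ y) ^ 2 := by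
  rw [vecMulVec_mulVec, op_smul_eq_smul, dotProduct_smul, smul_eq_mul, dotProduct_comm, sq]

lemma vecMul_dotProduct_mulVec_mulVec_of_mul_mul_eq [CommSemiring R] {B G : Matrix n n R}
    (hG : B * G * B = B) (x y : n → R) :
    (x ᵥ* B) ⬝ᵥ (G *ᵥ (B *ᵥ y)) = x ⬝ᵥ (B *ᵥ y) := by
  rw [← dotProduct_mulVec, mulVec_mulVec, mulVec_mulVec, hG]

lemma vecMul_mul_eq_of_forall_mulVec_eq_zero [CommRing R] {B G : Matrix n n R}
    (hG : B * G * B = B) {b : n → R} (hb : ∀ y, B *ᵥ y = 0 → b ⬝ᵥ y = 0) :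
    b ᵥ* (G * B) = b := by
  refine dotProduct_eq _ _ fun y => ?_
  have hker : B *ᵥ ((G * B) *ᵥ y - y) = 0 := by
    rw [mulVec_sub, mulVec_mulVec, ← Matrix.mul_assoc, hG, sub_self]
  rw [← dotProduct_mulVec, ← sub_eq_zero, ← dotProduct_sub]
  exact hb _ hker

lemma IsSymm.mulVec_transpose_mulVec_eq_of_forall_mulVec_eq_zero [CommRing R]
    {B G : Matrix n n R} (hB : B.IsSymm) (hG : B * G * B = B) {b : n → R}
    (hb : ∀ y, B *ᵥ y = 0 → b ⬝ᵥ y = 0) :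
    B *ᵥ (Gᵀ *ᵥ b) = b := by
  rw [mulVec_mulVec, ← hB.eq, ← transpose_mul, mulVec_transpose,
    vecMul_mul_eq_of_forall_mulVec_eq_zero (hB.eq.symm ▸ hG) hb]

lemma IsSymm.dotProduct_mulVec_eq_of_mul_mul_eq [CommSemiring R] {B G : Matrix n n R}
    (hB : B.IsSymm) (hG : B * G * B = B) {b x : n → R} (hx : B *ᵥ x = b) :
    b ⬝ᵥ (G *ᵥ b) = x ⬝ᵥ (B *ᵥ x) := by
  subst hx
  calc (B *ᵥ x) ⬝ᵥ (G *ᵥ (B *ᵥ x)) = (x ᵥ* B) ⬝ᵥ (G *ᵥ (B *ᵥ x)) := by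
        rw [← mulVec_transpose, hB.eq]
    _ = x ⬝ᵥ (B *ᵥ x) := vecMul_dotProduct_mulVec_mulVec_of_mul_mul_eq hG x x

lemma PosSemidef.dotProduct_mulVec_sq_le {B : Matrix n n ℝ} (hB : B.PosSemidef) (x y : n → ℝ) :
    (x ⬝ᵥ (B *ᵥ y)) ^ 2 ≤ (x ⬝ᵥ (B *ᵥ x)) * (y ⬝ᵥ (B *ᵥ y)) := by
  classical
  have := (toBilin' B).apply_mul_apply_le_of_forall_zero_le
    (fun z => by simpa [toBilin'_apply'] using hB.dotProduct_mulVec_nonneg z) x y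
  simp only [toBilin'_apply'] at this
  rwa [← (isHermitian_iff_isSymm.mp hB.1).dotProduct_mulVec_comm x y, ← sq] at this

lemma posSemidef_smul_sub_vecMulVec_iff {B : Matrix n n ℝ} (hB : B.IsHermitian) (b : n → ℝ)
    (lam : ℝ) :
    (lam • B - vecMulVec b b).PosSemidef ↔ ∀ y, (b ⬝ᵥ y) ^ 2 ≤ lam * (y ⬝ᵥ (B *ᵥ y)) := by
  have hherm : (lam • B - vecMulVec b b).IsHermitian :=
    (hB.smul (IsSelfAdjoint.all lam)).sub (by simpa using (posSemidef_vecMulVec_self_star b).1)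
  simp only [posSemidef_iff_dotProduct_mulVec, hherm, true_and, star_trivial, sub_mulVec,
    dotProduct_sub, smul_mulVec, dotProduct_smul, smul_eq_mul, dotProduct_vecMulVec_self_mulVec,
    sub_nonneg]

end Matrix

theorem stmt_11 {n : ℕ} (B Bg : Matrix (Fin n) (Fin n) ℝ)
    (hB : B.PosSemidef) (b : Fin n → ℝ) (lam : ℝ) (hlam : 0 < lam)
    (hBg : B * Bg * B = B) :
    ((lam • B - vecMulVec b b).PosSemidef ↔
      (∃ x, B.mulVec x = b) ∧ b ⬝ᵥ Bg.mulVec b ≤ lam) ∧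
    (∀ Bg' : Matrix (Fin n) (Fin n) ℝ, B * Bg' * B = B →
      (∃ x, B.mulVec x = b) → b ⬝ᵥ Bg'.mulVec b = b ⬝ᵥ Bg.mulVec b) := by
  have hBs : B.IsSymm := isHermitian_iff_isSymm.mp hB.1
  rw [posSemidef_smul_sub_vecMulVec_iff hB.1]
  refine ⟨⟨fun hbound => ?_, fun ⟨⟨x, hx⟩, hle⟩ y => ?_⟩, fun G hG ⟨x, hx⟩ => ?_⟩
  · have hker (y) (hy : B *ᵥ y = 0) : b ⬝ᵥ y = 0 :=
      pow_eq_zero_iff two_ne_zero |>.mp <|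
        le_antisymm (by simpa [hy] using hbound y) (sq_nonneg _)
    obtain ⟨x, hx⟩ : ∃ x, B *ᵥ x = b :=
      ⟨_, hBs.mulVec_transpose_mulVec_eq_of_forall_mulVec_eq_zero hBg hker⟩
    refine ⟨⟨x, hx⟩, ?_⟩
    have hq := hbound x
    rw [← hx, dotProduct_comm] at hq
    rw [hBs.dotProduct_mulVec_eq_of_mul_mul_eq hBg hx]
    have hxx : 0 ≤ x ⬝ᵥ (B *ᵥ x) := by simpa using hB.dotProduct_mulVec_nonneg x
    nlinarith
  · rw [hBs.dotProduct_mulVec_eq_of_mul_mul_eq hBg hx] at hle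
    rw [← hx, dotProduct_comm, hBs.dotProduct_mulVec_comm y x]
    have hyy : 0 ≤ y ⬝ᵥ (B *ᵥ y) := by simpa using hB.dotProduct_mulVec_nonneg y
    exact (hB.dotProduct_mulVec_sq_le x y).trans (mul_le_mul_of_nonneg_right hle hyy)
  · rw [hBs.dotProduct_mulVec_eq_of_mul_mul_eq hG hx,
      hBs.dotProduct_mulVec_eq_of_mul_mul_eq hBg hx]
end

section
/- Let D be a symmetric positive definite real n×n matrix and b₁, b₂ ∈ ℝⁿ. Then the matrix D + b₁b₁' − b₂b₂' is positive semidefinite if and only if b₂'(D + b₁b₁')⁻¹b₂ ≤ 1. -/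
/-!
Both conditions are read off the bordered matrix `[[A, b], [bᴴ, 1]]` with `A = D + b₁b₁'`:
by the Schur complement of the corner `1` it is positive semidefinite iff `A - bbᴴ` is, and by
the Schur complement of the positive definite block `A` iff the `1 × 1` matrix
`1 - bᴴA⁻¹b` is, i.e. iff `bᴴA⁻¹b ≤ 1`.
-/

open Matrix

namespace Matrix

variable {ι 𝕜 : Type*} [Field 𝕜] [PartialOrder 𝕜] [StarRing 𝕜] [StarOrderedRing 𝕜]

theorem posSemidef_iff_nonneg_of_unique [Unique ι] {M : Matrix ι ι 𝕜} :
    M.PosSemidef ↔ 0 ≤ M default default := by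
  rw [posSemidef_iff_dotProduct_mulVec]
  constructor
  · rintro ⟨-, h⟩
    simpa [dotProduct, mulVec] using h 1
  · intro h
    refine ⟨?_, fun x => ?_⟩
    · ext i j
      rw [Subsingleton.elim i default, Subsingleton.elim j default]
      exact (IsSelfAdjoint.of_nonneg h).star_eq
    · simpa [dotProduct, mulVec, mul_assoc] using star_left_conjugate_nonneg h (x default)

theorem PosDef.posSemidef_sub_vecMulVec_iff [Fintype ι] [DecidableEq ι] {A : Matrix ι ι 𝕜}
    (hA : A.PosDef) (b : ι → 𝕜) :
    (A - vecMulVec b (star b)).PosSemidef ↔ star b ⬝ᵥ A⁻¹ *ᵥ b ≤ 1 := by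
  have := hA.isUnit.invertible
  have : Invertible (1 : Matrix Unit Unit 𝕜) := invertibleOne
  have hSchur := (PosDef.fromBlocks₂₂ A (replicateCol Unit b) PosDef.one).symm.trans
    (PosDef.fromBlocks₁₁ (replicateCol Unit b) 1 hA)
  rw [inv_one, Matrix.mul_one, conjTranspose_replicateCol, ← vecMulVec_eq] at hSchur
  rw [hSchur, posSemidef_iff_nonneg_of_unique, Matrix.mul_assoc, ← replicateCol_mulVec,
    sub_apply, one_apply_eq, replicateRow_mul_replicateCol_apply, sub_nonneg]

end Matrix

theorem stmt_12 {n : ℕ} (D : Matrix (Fin n) (Fin n) ℝ) (hD : D.PosDef)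
    (b₁ b₂ : Fin n → ℝ) :
    (D + vecMulVec b₁ b₁ - vecMulVec b₂ b₂).PosSemidef ↔
      b₂ ⬝ᵥ (D + vecMulVec b₁ b₁)⁻¹.mulVec b₂ ≤ 1 := by
  have hA : (D + vecMulVec b₁ b₁).PosDef := hD.add_posSemidef (posSemidef_vecMulVec_self_star b₁)
  simpa only [star_trivial] using hA.posSemidef_sub_vecMulVec_iff b₂
end

section
/- Let τ be a symmetric positive definite l×l matrix, σ ≠ 0 real, A ∈ ℝˡ, γ ∈ ℝˡ, k > 0. If (τA − kγ)'(k(2+k)σ²τ + (1+k)²(τA)(τA)')⁻¹(τA − kγ) ≤ 1, then the matrix [σ²τ + (τA)(τA)'] − (1+k)⁻²[σ²τ + (τA − kγ)(τA − kγ)'] is positive semidefinite. -/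
/-!
With `u = τA`, `v = τA - kγ` and `M = k(2+k)σ²τ + (1+k)²uu'`, the identity `(1+k)² - 1 = k(2+k)`
shows that the difference of the two mean squared error matrices is `(1+k)⁻²(M - vv')`.
Here `M` is positive definite, and `M - vv'` and `1 - v'M⁻¹v` are the two Schur complements of
the block matrix `[[M, v], [v', 1]]`, so one is positive semidefinite iff the other is.
-/

open Matrix

theorem Matrix.PosDef.posSemidef_sub_vecMulVec_iff_s13 {n K : Type*} [Fintype n] [DecidableEq n]
    [Field K] [PartialOrder K] [StarRing K] [StarOrderedRing K]
    {M : Matrix n n K} (hM : M.PosDef) (v : n → K) :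
    (M - vecMulVec v (star v)).PosSemidef ↔ star v ⬝ᵥ M⁻¹ *ᵥ v ≤ 1 := by
  let := hM.isUnit.invertible
  let := invertibleOne (α := Matrix Unit Unit K)
  have hschur₂₂ := PosDef.fromBlocks₂₂ M (replicateCol Unit v) PosDef.one
  have hschur₁₁ := PosDef.fromBlocks₁₁ (replicateCol Unit v) 1 hM
  rw [hschur₂₂, inv_one, Matrix.mul_one, conjTranspose_replicateCol, ← vecMulVec_eq,
    Matrix.mul_assoc, ← replicateCol_mulVec, replicateRow_mul_replicateCol] at hschur₁₁
  have hdiag : (1 - of fun _ _ => star v ⬝ᵥ M⁻¹ *ᵥ v : Matrix Unit Unit K) =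
      diagonal fun _ => 1 - star v ⬝ᵥ M⁻¹ *ᵥ v := by
    ext; simp
  rw [hschur₁₁, hdiag, posSemidef_diagonal_iff]
  simp

theorem stmt_13 {l : ℕ} (τ : Matrix (Fin l) (Fin l) ℝ) (hτ : τ.PosDef)
    (σ : ℝ) (hσ : σ ≠ 0) (A γ : Fin l → ℝ) (k : ℝ) (hk : 0 < k)
    (h : (τ.mulVec A - k • γ) ⬝ᵥ
        ((k * (2 + k) * σ ^ 2) • τ +
          ((1 + k) ^ 2) • vecMulVec (τ.mulVec A) (τ.mulVec A))⁻¹.mulVec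
          (τ.mulVec A - k • γ) ≤ 1) :
    ((σ ^ 2 • τ + vecMulVec (τ.mulVec A) (τ.mulVec A)) -
      ((1 + k) ^ 2)⁻¹ •
        (σ ^ 2 • τ +
          vecMulVec (τ.mulVec A - k • γ) (τ.mulVec A - k • γ))).PosSemidef := by
  set u := τ *ᵥ A
  set v := τ *ᵥ A - k • γ
  set M := (k * (2 + k) * σ ^ 2) • τ + ((1 + k) ^ 2) • vecMulVec u u
  have hM : M.PosDef :=
    (hτ.smul (by positivity)).add_posSemidef
      ((posSemidef_vecMulVec_self_star u).smul (by positivity))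
  have hMv : (M - vecMulVec v v).PosSemidef := (hM.posSemidef_sub_vecMulVec_iff_s13 v).2 h
  have hdecomp : σ ^ 2 • τ + vecMulVec u u - ((1 + k) ^ 2)⁻¹ • (σ ^ 2 • τ + vecMulVec v v) =
      ((1 + k) ^ 2)⁻¹ • (M - vecMulVec v v) := by
    match_scalars
    · field_simp
      ring
    · field_simp
    · ring
  rw [hdecomp]
  exact hMv.smul (by positivity)
end
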